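/- arXiv:1909.02035 — 4 statements merged into one kernel-verified Lean document; each statement's English description precedes it below -/
import Mathlib

section
/- Let H(λ) = J⁵(0) + λV(λ) be the 5×5 matrix with J⁵(0) the zero-eigenvalue Jordan block and λV(λ) strictly lower triangular with entries (λV)_{j+1,j} = λμⱼ (j=1..4), (λV)_{j+2,j} = λ^{3/2}αⱼ (j=1..3), (λV)_{j+3,j} = λ²βⱼ (j=1,2), (λV)_{5,1} = λ^{5/2}γ. Write E = ε√λ. Then det(H(λ) - E·I) = λ^{5/2}·P(ε) + O(λ³), where P(ε) = -ε⁵ + (μ₁+μ₂+μ₃+μ₄)ε³ + (α₁+α₂+α₃)ε² + (β₁+β₂ - μ₁μ₃ - μ₁μ₄ - μ₂μ₄)ε + (γ - α₁μ₄ - μ₁α₃). -/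
/-!
With `s = √λ`, the entry of `H(λ) - E·I` in position `(i, j)` is `s ^ (i - j + 1)` times the
corresponding entry of the `λ`-independent coefficient matrix `N` (diagonal `-ε`, superdiagonal `1`,
the `μ`, `α`, `β`, `γ` below). So `H(λ) - E·I = s • D N D⁻¹` with `D = diag (s ^ i)`, and
`det (H(λ) - E·I) = s⁵ det N = λ^{5/2} P(ε)` exactly: the remainder vanishes for every `λ > 0`.
-/

open Matrix Filter Asymptotics

theorem det_of_zpow_sub_mul {n R : Type*} [Fintype n] [DecidableEq n] [Field R]
    {s : R} (hs : s ≠ 0) (w : n → ℤ) (N : Matrix n n R) :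
    det (of fun i j => s ^ (w i - w j + 1) * N i j) = s ^ Fintype.card n * det N := by
  have hconj : (of fun i j => s ^ (w i - w j + 1) * N i j) =
      s • (diagonal (fun i => s ^ w i) * N * diagonal (fun j => s ^ (-w j))) := by
    ext i j
    simp only [of_apply, Matrix.smul_apply, mul_diagonal, diagonal_mul, smul_eq_mul]
    rw [zpow_add₀ hs, zpow_sub₀ hs, _root_.zpow_neg, zpow_one]
    ring
  have hdiag :
      det (diagonal (fun i => s ^ w i)) * det (diagonal (fun j => s ^ (-w j))) = 1 := by
    rw [← det_mul, diagonal_mul_diagonal]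
    simp [mul_inv_cancel₀ (zpow_ne_zero _ hs)]
  rw [hconj, det_smul, det_mul, det_mul, mul_right_comm _ (det N), hdiag, one_mul]

section

variable (μ₁ μ₂ μ₃ μ₄ α₁ α₂ α₃ β₁ β₂ γ ε : ℝ)

def jordanCoeffMatrix : Matrix (Fin 5) (Fin 5) ℝ :=
  !![-ε, 1, 0, 0, 0;
     μ₁, -ε, 1, 0, 0;
     α₁, μ₂, -ε, 1, 0;
     β₁, α₂, μ₃, -ε, 1;
     γ, β₂, α₃, μ₄, -ε]

theorem det_jordanCoeffMatrix :
    det (jordanCoeffMatrix μ₁ μ₂ μ₃ μ₄ α₁ α₂ α₃ β₁ β₂ γ ε) =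
      -ε ^ 5 + (μ₁ + μ₂ + μ₃ + μ₄) * ε ^ 3 + (α₁ + α₂ + α₃) * ε ^ 2
        + (β₁ + β₂ - μ₁ * μ₃ - μ₁ * μ₄ - μ₂ * μ₄) * ε + (γ - α₁ * μ₄ - μ₁ * α₃) := by
  simp [jordanCoeffMatrix, det_succ_row_zero, Fin.sum_univ_succ, Fin.succAbove]
  ring

theorem perturbedJordan_sq_eq_of_zpow_mul_jordanCoeffMatrix {s : ℝ} (hs : 0 < s) :
    !![-ε * Real.sqrt (s ^ 2), 1, 0, 0, 0;
       s ^ 2 * μ₁, -ε * Real.sqrt (s ^ 2), 1, 0, 0;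
       s ^ 2 * Real.sqrt (s ^ 2) * α₁, s ^ 2 * μ₂, -ε * Real.sqrt (s ^ 2), 1, 0;
       (s ^ 2) ^ 2 * β₁, s ^ 2 * Real.sqrt (s ^ 2) * α₂, s ^ 2 * μ₃, -ε * Real.sqrt (s ^ 2), 1;
       (s ^ 2) ^ 2 * Real.sqrt (s ^ 2) * γ, (s ^ 2) ^ 2 * β₂, s ^ 2 * Real.sqrt (s ^ 2) * α₃,
         s ^ 2 * μ₄, -ε * Real.sqrt (s ^ 2)] =
      of fun i j : Fin 5 => s ^ (((i : ℕ) : ℤ) - (j : ℕ) + 1) *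
        jordanCoeffMatrix μ₁ μ₂ μ₃ μ₄ α₁ α₂ α₃ β₁ β₂ γ ε i j := by
  rw [Real.sqrt_sq hs.le]
  ext i j
  fin_cases i <;> fin_cases j <;> simp [jordanCoeffMatrix, ← pow_succ, ← pow_mul, mul_comm ε]

end

/-- Leading-order secular determinant for the hierarchically perturbed 5×5 Jordan block:
    with E = ε√λ, det(H(λ) - E·I) = λ^{5/2}·P(ε) + O(λ³) as λ → 0⁺, where
    P(ε) = -ε⁵ + (μ₁+μ₂+μ₃+μ₄)ε³ + (α₁+α₂+α₃)ε²
           + (β₁+β₂-μ₁μ₃-μ₁μ₄-μ₂μ₄)ε + (γ - α₁μ₄ - μ₁α₃). -/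
theorem stmt11 (μ₁ μ₂ μ₃ μ₄ α₁ α₂ α₃ β₁ β₂ γ : ℝ) (ε : ℝ) :
    let M : ℝ → Matrix (Fin 5) (Fin 5) ℝ := fun l =>
      !![-ε * Real.sqrt l, 1, 0, 0, 0;
         l * μ₁, -ε * Real.sqrt l, 1, 0, 0;
         l * Real.sqrt l * α₁, l * μ₂, -ε * Real.sqrt l, 1, 0;
         l ^ 2 * β₁, l * Real.sqrt l * α₂, l * μ₃, -ε * Real.sqrt l, 1;
         l ^ 2 * Real.sqrt l * γ, l ^ 2 * β₂, l * Real.sqrt l * α₃, l * μ₄,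
           -ε * Real.sqrt l]
    let P : ℝ :=
      -ε ^ 5 + (μ₁ + μ₂ + μ₃ + μ₄) * ε ^ 3 + (α₁ + α₂ + α₃) * ε ^ 2
        + (β₁ + β₂ - μ₁ * μ₃ - μ₁ * μ₄ - μ₂ * μ₄) * ε + (γ - α₁ * μ₄ - μ₁ * α₃)
    (fun l : ℝ => (M l).det - l ^ 2 * Real.sqrt l * P)
      =O[nhdsWithin 0 (Set.Ioi 0)] (fun l : ℝ => l ^ 3) := by
  intro M P
  refine EventuallyEq.trans_isBigO ?_ (isBigO_zero _ _)
  filter_upwards [self_mem_nhdsWithin] with l (hl : 0 < l)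
  obtain ⟨s, hs, rfl⟩ : ∃ s > 0, l = s ^ 2 :=
    ⟨Real.sqrt l, Real.sqrt_pos.2 hl, (Real.sq_sqrt hl.le).symm⟩
  have hM : M (s ^ 2) = _ :=
    perturbedJordan_sq_eq_of_zpow_mul_jordanCoeffMatrix μ₁ μ₂ μ₃ μ₄ α₁ α₂ α₃ β₁ β₂ γ ε hs
  rw [hM, det_of_zpow_sub_mul hs.ne', Fintype.card_fin, det_jordanCoeffMatrix,
    Real.sqrt_sq hs.le]
  ring
end

section
/- Let H(g) be the 8×8 tridiagonal real matrix with H_{j,j+1} = -1 + t_j(g), H_{j+1,j} = -1 - t_j(g), zero diagonal, where (t₁,...,t₇) = (δ,γ,β,α,β,γ,δ) and α = √(1-ag), β = √(1-bg), γ = √(1-cg), δ = √(1-dg) for positive constants a,b,c,d and 0 ≤ g ≤ min(1/a,1/b,1/c,1/d). Then the characteristic polynomial of H(g) in the variable E is of the form E⁸ + p₃(g)E⁶ + p₂(g)E⁴ + p₁(g)E² + p₀(g) where each coefficient of E^{8-2k} is a polynomial in g divisible by g^k; consequently, the eigenvalues satisfy the exact scaling E_n(g) = E_n(1)·√g for g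 > 0. -/
/-!
The determinant of a tridiagonal matrix with constant diagonal `x` is a continuant: it depends
on the off-diagonal entries only through the products `u i * v i`. For `H(g)` these products are
`(-1 + tᵢ)(-1 - tᵢ) = 1 - tᵢ² = κᵢ g` with `κ = (d, c, b, a, b, c, d)`, so the continuant
recursion makes `charpoly (H g)` an even polynomial in which the coefficient of `E^(8-2k)` is
`g^k` times a constant. Hence `charpoly (H g) (E √g) = g⁴ charpoly (H 1) E`.
-/

open Matrix Polynomial

section Tridiagonal

variable {R : Type*} [CommRing R]

-- `k` shifts the indices of `u` and `v`, so that minors of `tridiagonal x u v k n` are again of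
-- this form.
def tridiagonal (x : R) (u v : ℕ → R) (k n : ℕ) : Matrix (Fin n) (Fin n) R :=
  Matrix.of fun i j =>
    if (j : ℕ) = i + 1 then u (k + i)
    else if (i : ℕ) = j + 1 then v (k + j)
    else if i = j then x else 0

def continuant (x : R) (p : ℕ → R) : ℕ → ℕ → R
  | _, 0 => 1
  | _, 1 => x
  | k, n + 2 => x * continuant x p (k + 1) (n + 1) - p k * continuant x p (k + 2) n

theorem det_tridiagonal_succ_succ (x : R) (u v : ℕ → R) (k n : ℕ) :
    (tridiagonal x u v k (n + 2)).det
      = x * (tridiagonal x u v (k + 1) (n + 1)).det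
        - u k * v k * (tridiagonal x u v (k + 2) n).det := by
  set A := tridiagonal x u v k (n + 2)
  set B := A.submatrix Fin.succ (Fin.succ 0).succAbove
  have hminor₀ : A.submatrix Fin.succ Fin.succ = tridiagonal x u v (k + 1) (n + 1) := by
    ext i j
    simp only [A, tridiagonal, submatrix_apply, of_apply, Fin.val_succ, Fin.ext_iff]
    split_ifs <;> first | rfl | omega | (congr 1; omega)
  have hminor₁ : B.submatrix Fin.succ Fin.succ = tridiagonal x u v (k + 2) n := by
    ext i j
    simp only [B, A, tridiagonal, submatrix_apply, of_apply, Fin.val_succ,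
      Fin.succ_succAbove_succ, Fin.succAbove_zero, Fin.ext_iff]
    split_ifs <;> first | rfl | omega | (congr 1; omega)
  have hB : B.det = v k * (tridiagonal x u v (k + 2) n).det := by
    rw [det_succ_column_zero, Fin.sum_univ_succ, Finset.sum_eq_zero, Fin.succAbove_zero, hminor₁]
    · simp [B, A, tridiagonal]
    · intro i _
      simp [B, A, tridiagonal]
  rw [det_succ_row_zero, Fin.sum_univ_succ, Fin.sum_univ_succ, Finset.sum_eq_zero,
    Fin.succAbove_zero, hminor₀, hB]
  · simp [A, tridiagonal]
    ring
  · intro j _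
    simp [A, tridiagonal, Fin.ext_iff]

theorem det_tridiagonal (x : R) (u v : ℕ → R) (k n : ℕ) :
    (tridiagonal x u v k n).det = continuant x (fun i => u i * v i) k n := by
  induction k, n using continuant.induct with
  | case1 k => simp [continuant]
  | case2 k => simp [continuant, tridiagonal]
  | case3 k n ih₁ ih₂ => rw [det_tridiagonal_succ_succ, ih₁, ih₂, continuant]

theorem charmatrix_tridiagonal (x : R) (u v : ℕ → R) (k n : ℕ) :
    charmatrix (tridiagonal x u v k n)
      = tridiagonal (X - C x) (fun i => -C (u i)) (fun i => -C (v i)) k n := by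
  ext i j
  by_cases hij : i = j
  · subst hij
    simp [charmatrix_apply_eq, tridiagonal]
  · rw [charmatrix_apply_ne _ _ _ hij]
    simp only [tridiagonal, of_apply, if_neg hij]
    split_ifs <;> simp

theorem charpoly_tridiagonal (x : R) (u v : ℕ → R) (k n : ℕ) :
    (tridiagonal x u v k n).charpoly = continuant (X - C x) (fun i => C (u i * v i)) k n := by
  simp only [Matrix.charpoly, charmatrix_tridiagonal, det_tridiagonal, neg_mul_neg, C_mul]

end Tridiagonal

theorem charpoly_tridiagonal_sqrt (w : ℕ → ℝ) (g : ℝ) (hw : ∀ i, w i * g ≤ 1) (n : ℕ) :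
    (tridiagonal 0 (fun i => -1 + √(1 - w i * g)) (fun i => -1 - √(1 - w i * g)) 0 n).charpoly
      = continuant X (fun i => C (w i * g)) 0 n := by
  have hprod (i : ℕ) : (-1 + √(1 - w i * g)) * (-1 - √(1 - w i * g)) = w i * g := by
    linear_combination -Real.sq_sqrt (sub_nonneg.mpr (hw i))
  simp only [charpoly_tridiagonal, map_zero, sub_zero, hprod]

def chainWeight (a b c d : ℝ) (n : ℕ) : ℝ :=
  if n = 0 ∨ n = 6 then d else if n = 1 ∨ n = 5 then c else if n = 2 ∨ n = 4 then b else a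

theorem mul_le_one_of_le_one_div {x g : ℝ} (hg₀ : 0 ≤ g) (hg : g ≤ 1 / x) : x * g ≤ 1 := by
  rcases le_or_gt x 0 with hx | hx
  · exact (mul_nonpos_of_nonpos_of_nonneg hx hg₀).trans zero_le_one
  · exact (le_div_iff₀' hx).mp hg

theorem chainWeight_mul_le_one {a b c d g : ℝ} (hg₀ : 0 ≤ g)
    (hg : g ≤ min (min (1 / a) (1 / b)) (min (1 / c) (1 / d))) (n : ℕ) :
    chainWeight a b c d n * g ≤ 1 := by
  simp only [le_min_iff] at hg
  unfold chainWeight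
  split_ifs <;> apply mul_le_one_of_le_one_div hg₀ <;> tauto

noncomputable def chainCharpoly (a b c d g : ℝ) : ℝ[X] :=
  X ^ 8 + C (g * -(a + 2 * b + 2 * c + 2 * d)) * X ^ 6
    + C (g ^ 2 * (d ^ 2 + 2 * c * d + c ^ 2 + 4 * b * d + 2 * b * c + b ^ 2 + 2 * a * d
        + 2 * a * c)) * X ^ 4
    + C (g ^ 3 * -(2 * b * d ^ 2 + 2 * b * c * d + 2 * b ^ 2 * d + a * d ^ 2 + 2 * a * c * d
        + a * c ^ 2)) * X ^ 2
    + C (g ^ 4 * (b ^ 2 * d ^ 2))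

theorem continuant_chainWeight (a b c d g : ℝ) :
    continuant X (fun i => C (chainWeight a b c d i * g)) 0 8 = chainCharpoly a b c d g := by
  simp only [continuant, chainWeight, chainCharpoly]
  norm_num
  simp only [C_ofNat]
  ring

theorem eval_chainCharpoly_mul_sqrt (a b c d : ℝ) {g : ℝ} (hg : 0 ≤ g) (E : ℝ) :
    (chainCharpoly a b c d g).eval (E * √g) = g ^ 4 * (chainCharpoly a b c d 1).eval E := by
  obtain ⟨s, hs, rfl⟩ : ∃ s, 0 ≤ s ∧ g = s ^ 2 := ⟨√g, Real.sqrt_nonneg g, (Real.sq_sqrt hg).symm⟩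
  simp only [chainCharpoly, eval_add, eval_mul, eval_pow, eval_C, eval_X, Real.sqrt_sq hs]
  ring

theorem stmt14_general (a b c d : ℝ) :
    let gmax : ℝ := min (min (1 / a) (1 / b)) (min (1 / c) (1 / d))
    let t : ℝ → ℕ → ℝ := fun g n =>
      if n = 0 ∨ n = 6 then Real.sqrt (1 - d * g)
      else if n = 1 ∨ n = 5 then Real.sqrt (1 - c * g)
      else if n = 2 ∨ n = 4 then Real.sqrt (1 - b * g)
      else Real.sqrt (1 - a * g)
    let H : ℝ → Matrix (Fin 8) (Fin 8) ℝ := fun g =>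
      Matrix.of fun i j =>
        if (j : ℕ) = (i : ℕ) + 1 then -1 + t g (i : ℕ)
        else if (i : ℕ) = (j : ℕ) + 1 then -1 - t g (j : ℕ)
        else 0
    (∃ q₃ q₂ q₁ q₀ : Polynomial ℝ, ∀ g ∈ Set.Icc (0 : ℝ) gmax,
      Matrix.charpoly (H g) =
        X ^ 8 + C (g * q₃.eval g) * X ^ 6 + C (g ^ 2 * q₂.eval g) * X ^ 4
          + C (g ^ 3 * q₁.eval g) * X ^ 2 + C (g ^ 4 * q₀.eval g)) ∧
    (1 ≤ gmax → ∀ g ∈ Set.Icc (0 : ℝ) gmax, ∀ E : ℝ,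
      (Matrix.charpoly (H 1)).eval E = 0 →
      (Matrix.charpoly (H g)).eval (E * Real.sqrt g) = 0) := by
  intro gmax t H
  have hH (g : ℝ) : H g = tridiagonal 0 (fun i => -1 + √(1 - chainWeight a b c d i * g))
      (fun i => -1 - √(1 - chainWeight a b c d i * g)) 0 8 := by
    have ht (n : ℕ) : t g n = √(1 - chainWeight a b c d n * g) := by
      simp only [t, chainWeight]
      split_ifs <;> rfl
    ext i j
    simp only [H, tridiagonal, of_apply, ht, ite_self, zero_add]
  have hcharpoly (g : ℝ) (hg : g ∈ Set.Icc 0 gmax) : (H g).charpoly = chainCharpoly a b c d g := by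
    rw [hH, charpoly_tridiagonal_sqrt _ _ (chainWeight_mul_le_one hg.1 hg.2),
      continuant_chainWeight]
  refine ⟨⟨C _, C _, C _, C _, fun g hg => by
    rw [hcharpoly g hg, chainCharpoly]
    simp only [eval_C]
    rfl⟩, ?_⟩
  intro h1 g hg E hE
  rw [hcharpoly 1 ⟨zero_le_one, h1⟩] at hE
  rw [hcharpoly g hg, eval_chainCharpoly_mul_sqrt _ _ _ _ hg.1, hE, mul_zero]

/-- The exactly solvable PT-symmetric 8-site chain H^{(8)}_{ES}(g): its characteristic
    polynomial has the form E⁸ + p₃(g)E⁶ + p₂(g)E⁴ + p₁(g)E² + p₀(g), where the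
    coefficient of E^{8-2k} is a polynomial in g divisible by g^k; consequently the
    eigenvalues obey the exact scaling E_n(g) = E_n(1)·√g. -/
theorem stmt14 (a b c d : ℝ) (ha : 0 < a) (hb : 0 < b) (hc : 0 < c) (hd : 0 < d) :
    let gmax : ℝ := min (min (1 / a) (1 / b)) (min (1 / c) (1 / d))
    let t : ℝ → ℕ → ℝ := fun g n =>
      if n = 0 ∨ n = 6 then Real.sqrt (1 - d * g)
      else if n = 1 ∨ n = 5 then Real.sqrt (1 - c * g)
      else if n = 2 ∨ n = 4 then Real.sqrt (1 - b * g)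
      else Real.sqrt (1 - a * g)
    let H : ℝ → Matrix (Fin 8) (Fin 8) ℝ := fun g =>
      Matrix.of fun i j =>
        if (j : ℕ) = (i : ℕ) + 1 then -1 + t g (i : ℕ)
        else if (i : ℕ) = (j : ℕ) + 1 then -1 - t g (j : ℕ)
        else 0
    (∃ q₃ q₂ q₁ q₀ : Polynomial ℝ, ∀ g ∈ Set.Icc (0 : ℝ) gmax,
      Matrix.charpoly (H g) =
        X ^ 8 + C (g * q₃.eval g) * X ^ 6 + C (g ^ 2 * q₂.eval g) * X ^ 4
          + C (g ^ 3 * q₁.eval g) * X ^ 2 + C (g ^ 4 * q₀.eval g)) ∧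
    (1 ≤ gmax → ∀ g ∈ Set.Icc (0 : ℝ) gmax, ∀ E : ℝ,
      (Matrix.charpoly (H 1)).eval E = 0 →
      (Matrix.charpoly (H g)).eval (E * Real.sqrt g) = 0) :=
  stmt14_general a b c d
end

section
/- Let H(λ) = J³(0) + λV where V is an arbitrary real 3×3 matrix with lower-left entry V₃₁ = γ ≠ 0. Then for all sufficiently small λ > 0 the matrix H(λ) has at least one pair of non-real complex-conjugate eigenvalues; more precisely, its three eigenvalues satisfy E_k = ω^k γ^{1/3} λ^{1/3} (1 + O(λ^{1/3})) where ω = e^{2πi/3}. -/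
/-!
Let `s` be the real cube root of `γ` and `u = λ^{1/3}`. The characteristic polynomial of
`J + λV` is `z³ - γλ + λ q_λ(z)` with `q_λ` a quadratic whose coefficients stay bounded, so at
the three cube roots `t_k = ω^k s u` of `γλ` it is `O(u⁴)`, below `(|s| u / 2)³` for small `u`.
Hence each disc of radius `|s| u / 2` around a `t_k` contains a root; the `t_k` are `√3 |s| u`
apart, so these are three distinct roots, i.e. all of them. In
`|p(t_k)| = ∏ⱼ |t_k - e_j|` the two factors with `j ≠ k` are at least `|s| u`, which gives
`|e_k - t_k| = O(u²) = O(λ^{2/3})`. The root near `t_1` is not real, because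
`|Im t_1| = (√3/2) |s| u` is larger than the radius of its disc.
-/

open Matrix Polynomial Filter Asymptotics Complex

open scoped Real Topology

namespace Polynomial

variable {p : ℂ[X]}

theorem Monic.norm_eval_eq_prod_roots (hp : p.Monic) (z : ℂ) :
    ‖p.eval z‖ = (p.roots.map fun r => ‖z - r‖).prod := by
  rw [(IsAlgClosed.splits p).eval_eq_prod_roots_of_monic hp]
  simpa using map_multiset_prod (normHom : ℂ →*₀ ℝ) (p.roots.map (z - ·))

theorem Monic.exists_mem_roots_dist_lt (hp : p.Monic) {z : ℂ} {ε : ℝ} (hε : 0 ≤ ε)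
    (h : ‖p.eval z‖ < ε ^ p.natDegree) : ∃ r ∈ p.roots, dist z r < ε := by
  by_contra! hfar
  refine h.not_ge ?_
  calc ε ^ p.natDegree = (p.roots.map fun _ => ε).prod := by
        simp [IsAlgClosed.card_roots_eq_natDegree]
    _ ≤ (p.roots.map fun r => ‖z - r‖).prod :=
        Multiset.prod_map_le_prod_map₀ _ _ (fun _ _ => hε) fun r hr =>
          dist_eq_norm z r ▸ hfar r hr
    _ = ‖p.eval z‖ := (hp.norm_eval_eq_prod_roots z).symm

/-- The roots found near the `t k` are distinct, hence all the roots of `p`; so in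
`‖p (t k)‖ = ∏ j, ‖t k - e j‖` every factor with `j ≠ k` is at least `d - ε`. -/
theorem Monic.exists_roots_near_of_pairwise_dist_le {n : ℕ} (hp : p.Monic) (hn : p.natDegree = n)
    {t : Fin n → ℂ} {d ε : ℝ} (hε : 0 ≤ ε) (hεd : 2 * ε ≤ d)
    (hsep : Pairwise fun j k => d ≤ dist (t j) (t k)) (hsmall : ∀ k, ‖p.eval (t k)‖ < ε ^ n) :
    ∃ e : Fin n → ℂ, ∀ k, p.IsRoot (e k) ∧ dist (t k) (e k) < ε ∧
      dist (t k) (e k) * (d - ε) ^ (n - 1) ≤ ‖p.eval (t k)‖ := by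
  choose e he_mem he_near using fun k => hp.exists_mem_roots_dist_lt hε (hn ▸ hsmall k)
  have hfar : ∀ j k, j ≠ k → d - ε ≤ dist (t k) (e j) := fun j k hjk => by
    linarith [hsep hjk, dist_triangle (t j) (e j) (t k), dist_comm (e j) (t k), he_near j]
  have he_inj : Function.Injective e := fun j k hjk => by
    by_contra hne
    have := hfar j k hne
    rw [hjk] at this
    linarith [he_near k]
  have hroots : Finset.univ.val.map e = p.roots := by
    refine Multiset.eq_of_le_of_card_le
      ((Multiset.le_iff_subset (Finset.univ.nodup.map he_inj)).2 ?_) ?_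
    · intro r hr
      obtain ⟨k, -, rfl⟩ := Multiset.mem_map.1 hr
      exact he_mem k
    · simp [IsAlgClosed.card_roots_eq_natDegree, hn]
  refine ⟨e, fun k => ⟨(mem_roots hp.ne_zero).1 (he_mem k), he_near k, ?_⟩⟩
  rw [hp.norm_eval_eq_prod_roots, ← hroots, Multiset.map_map, ← Finset.prod_eq_multiset_prod,
    ← Finset.mul_prod_erase _ _ (Finset.mem_univ k), dist_eq_norm]
  refine mul_le_mul_of_nonneg_left ?_ (norm_nonneg _)
  calc (d - ε) ^ (n - 1) = ∏ _j ∈ Finset.univ.erase k, (d - ε) := by simp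
    _ ≤ ∏ j ∈ Finset.univ.erase k, ‖t k - e j‖ :=
        Finset.prod_le_prod (fun _ _ => by linarith) fun j hj =>
          dist_eq_norm (t k) (e j) ▸ hfar j k (Finset.ne_of_mem_erase hj)

end Polynomial

theorem rpow_one_third_pow_three {x : ℝ} (hx : 0 ≤ x) : (x ^ ((1 : ℝ) / 3)) ^ 3 = x := by
  rw [← Real.rpow_natCast, ← Real.rpow_mul hx]; norm_num

theorem tendsto_rpow_nhdsGT_zero {y : ℝ} (hy : 0 < y) :
    Tendsto (fun x : ℝ => x ^ y) (𝓝[>] 0) (𝓝[>] 0) := by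
  refine tendsto_nhdsWithin_iff.2 ⟨?_, ?_⟩
  · exact ((Real.continuous_rpow_const hy.le).tendsto' 0 0 (Real.zero_rpow hy.ne')).mono_left
      nhdsWithin_le_nhds
  · filter_upwards [self_mem_nhdsWithin] with x hx using Real.rpow_pos_of_pos hx y

noncomputable def signedCbrt (x : ℝ) : ℝ :=
  if 0 ≤ x then x ^ ((1 : ℝ) / 3) else -((-x) ^ ((1 : ℝ) / 3))

theorem signedCbrt_pow_three (x : ℝ) : signedCbrt x ^ 3 = x := by
  unfold signedCbrt
  split_ifs with hx
  · exact rpow_one_third_pow_three hx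
  · rw [neg_pow, rpow_one_third_pow_three (by linarith)]; ring

theorem signedCbrt_ne_zero {x : ℝ} (hx : x ≠ 0) : signedCbrt x ≠ 0 := fun h =>
  hx (by rw [← signedCbrt_pow_three x, h, zero_pow three_ne_zero])

def nilpotentJordanBlock (R : Type*) [Zero R] [One R] (n : ℕ) : Matrix (Fin n) (Fin n) R :=
  Matrix.of fun i j => if (j : ℕ) = (i : ℕ) + 1 then 1 else 0

theorem aeval_charpoly_nilpotentJordanBlock_add_smul (V : Matrix (Fin 3) (Fin 3) ℝ) :
    ∃ a b₀ b₁ c₀ c₁ : ℝ, ∀ (lam : ℝ) (z : ℂ),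
      aeval z (nilpotentJordanBlock ℝ 3 + lam • V).charpoly =
        z ^ 3 - V 2 0 * lam + lam * (a * z ^ 2 + (b₀ + lam * b₁) * z + lam * (c₀ + lam * c₁)) := by
  -- `charpoly A = X³ - tr A • X² + (sum of principal 2×2 minors of A) • X - det A`,
  -- with `-λ V₂₀` split off from `-det (J + λV)`
  refine ⟨-V.trace, -(V 1 0 + V 2 1),
    V 0 0 * V 1 1 - V 0 1 * V 1 0 + V 0 0 * V 2 2 - V 0 2 * V 2 0 + V 1 1 * V 2 2 - V 1 2 * V 2 1,
    V 0 0 * V 2 1 + V 1 0 * V 2 2 - V 0 1 * V 2 0 - V 1 2 * V 2 0, -V.det, fun lam z => ?_⟩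
  simp [Matrix.charpoly, Matrix.det_fin_three, Matrix.trace_fin_three, nilpotentJordanBlock]
  ring

theorem norm_mul_quadratic_le {a b₀ b₁ c₀ c₁ lam : ℝ} (h0 : 0 ≤ lam) (h1 : lam ≤ 1) (z : ℂ) :
    ‖lam * (a * z ^ 2 + (b₀ + lam * b₁) * z + lam * (c₀ + lam * c₁))‖ ≤
      lam * (|a| + |b₀| + |b₁| + |c₀| + |c₁|) * (‖z‖ ^ 2 + ‖z‖ + lam) := by
  set K := |a| + |b₀| + |b₁| + |c₀| + |c₁|
  have hlin : ∀ x y : ℝ, |x + lam * y| ≤ |x| + |y| := fun x y => by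
    calc |x + lam * y| ≤ |x| + lam * |y| := by
          simpa [abs_mul, abs_of_nonneg h0] using abs_add_le x (lam * y)
      _ ≤ |x| + |y| := by gcongr; exact mul_le_of_le_one_left (abs_nonneg y) h1
  have ha : |a| ≤ K := by
    linarith [abs_nonneg b₀, abs_nonneg b₁, abs_nonneg c₀, abs_nonneg c₁]
  have hb : |b₀ + lam * b₁| ≤ K := by
    linarith [hlin b₀ b₁, abs_nonneg a, abs_nonneg c₀, abs_nonneg c₁]
  have hc : |c₀ + lam * c₁| ≤ K := by
    linarith [hlin c₀ c₁, abs_nonneg a, abs_nonneg b₀, abs_nonneg b₁]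
  calc _ ≤ lam * (|a| * ‖z‖ ^ 2 + |b₀ + lam * b₁| * ‖z‖ + lam * |c₀ + lam * c₁|) := by
        rw [norm_mul, norm_real, Real.norm_of_nonneg h0]
        gcongr
        refine (norm_add₃_le ..).trans_eq ?_
        rw [← ofReal_mul lam b₁, ← ofReal_add b₀, ← ofReal_mul lam c₁, ← ofReal_add c₀]
        simp only [norm_mul, norm_pow, norm_real, Real.norm_eq_abs, abs_of_nonneg h0]
    _ ≤ lam * (K * ‖z‖ ^ 2 + K * ‖z‖ + lam * K) := by gcongr
    _ = _ := by ring

theorem exists_norm_aeval_charpoly_sub_le (V : Matrix (Fin 3) (Fin 3) ℝ) :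
    ∃ K : ℝ, 0 ≤ K ∧ ∀ lam ∈ Set.Icc (0 : ℝ) 1, ∀ z : ℂ,
      ‖aeval z (nilpotentJordanBlock ℝ 3 + lam • V).charpoly - (z ^ 3 - V 2 0 * lam)‖ ≤
        lam * K * (‖z‖ ^ 2 + ‖z‖ + lam) := by
  obtain ⟨a, b₀, b₁, c₀, c₁, h⟩ := aeval_charpoly_nilpotentJordanBlock_add_smul V
  refine ⟨|a| + |b₀| + |b₁| + |c₀| + |c₁|, by positivity, fun lam hlam z => ?_⟩
  rw [h, add_sub_cancel_left]
  exact norm_mul_quadratic_le hlam.1 hlam.2 z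

section

local notation "ω" => exp (2 * π * I / 3)

theorem isPrimitiveRoot_exp_two_pi_I_div_three : IsPrimitiveRoot ω 3 := by
  exact_mod_cast isPrimitiveRoot_exp 3 three_ne_zero

theorem exp_two_pi_I_div_three : ω = -(1 / 2) + (√3 / 2 : ℝ) * I := by
  rw [show 2 * π * I / 3 = (2 * π / 3 : ℝ) * I by push_cast; ring, exp_mul_I,
    ← ofReal_cos, ← ofReal_sin, show 2 * π / 3 = π - π / 3 by ring, Real.cos_pi_sub,
    Real.sin_pi_sub, Real.cos_pi_div_three, Real.sin_pi_div_three]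
  push_cast; ring

theorem exp_two_pi_I_div_three_sq : ω ^ 2 = -(1 / 2) - (√3 / 2 : ℝ) * I := by
  have h3 : ((√3 : ℝ) : ℂ) ^ 2 = 3 := by exact_mod_cast Real.sq_sqrt (by norm_num : (0 : ℝ) ≤ 3)
  rw [exp_two_pi_I_div_three]
  push_cast
  linear_combination I ^ 2 / 4 * h3 + 3 / 4 * I_sq

theorem norm_exp_two_pi_I_div_three_pow_mul (k : ℕ) (r : ℝ) : ‖ω ^ k * r‖ = |r| := by
  rw [norm_mul, norm_pow, isPrimitiveRoot_exp_two_pi_I_div_three.norm'_eq_one three_ne_zero,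
    one_pow, one_mul, norm_real, Real.norm_eq_abs]

theorem exp_two_pi_I_div_three_pow_mul_pow_three (k : ℕ) (r : ℂ) : (ω ^ k * r) ^ 3 = r ^ 3 := by
  rw [mul_pow, ← pow_mul, mul_comm k, pow_mul, isPrimitiveRoot_exp_two_pi_I_div_three.pow_eq_one,
    one_pow, one_mul]

theorem exp_two_pi_I_div_three_im : (ω).im = √3 / 2 := by
  simp [exp_two_pi_I_div_three]

theorem abs_im_exp_two_pi_I_div_three_mul (r : ℝ) : |(ω * r).im| = √3 / 2 * |r| := by
  rw [im_mul_ofReal, abs_mul, exp_two_pi_I_div_three_im, abs_of_nonneg (by positivity)]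

theorem dist_exp_two_pi_I_div_three_pow_mul {j k : Fin 3} (hjk : j ≠ k) (r : ℝ) :
    dist (ω ^ (j : ℕ) * r) (ω ^ (k : ℕ) * r) = √3 * |r| := by
  have h3 : √3 ^ 2 = 3 := Real.sq_sqrt (by norm_num)
  have hnorm : ‖ω ^ (j : ℕ) - ω ^ (k : ℕ)‖ = √3 := by
    rw [Complex.norm_def, Complex.normSq_apply]
    congr 1
    fin_cases j <;> fin_cases k <;> simp only [ne_eq, not_true_eq_false] at hjk <;>
      simp only [pow_zero, pow_one, exp_two_pi_I_div_three_sq] <;>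
      simp [exp_two_pi_I_div_three] <;> linarith
  rw [dist_eq_norm, ← sub_mul, norm_mul, hnorm, norm_real, Real.norm_eq_abs]

theorem Polynomial.Monic.exists_roots_near_cube_roots {p : ℂ[X]} (hp : p.Monic)
    (hdeg : p.natDegree = 3) {r : ℝ} (hr : r ≠ 0)
    (hsmall : ∀ k : Fin 3, ‖p.eval (ω ^ (k : ℕ) * r)‖ < (|r| / 2) ^ 3) :
    ∃ e : Fin 3 → ℂ, (∀ k : Fin 3, p.IsRoot (e k) ∧
      ‖e k - ω ^ (k : ℕ) * r‖ * r ^ 2 ≤ ‖p.eval (ω ^ (k : ℕ) * r)‖) ∧ (e 1).im ≠ 0 := by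
  have hsqrt3 : 3 / 2 ≤ √3 := Real.le_sqrt_of_sq_le (by norm_num)
  have hr0 : 0 < |r| := abs_pos.2 hr
  obtain ⟨e, he⟩ := hp.exists_roots_near_of_pairwise_dist_le hdeg (by positivity)
    (by nlinarith) (fun j k hjk => (dist_exp_two_pi_I_div_three_pow_mul hjk r).ge) hsmall
  refine ⟨e, fun k => ⟨(he k).1, ?_⟩, fun him => ?_⟩
  · obtain ⟨-, -, hk⟩ := he k
    have hd : |r| ≤ √3 * |r| - |r| / 2 := by nlinarith
    rw [← dist_eq_norm, dist_comm, ← sq_abs r]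
    exact (mul_le_mul_of_nonneg_left (pow_le_pow_left₀ hr0.le hd 2) dist_nonneg).trans hk
  · have h1 : |(ω * r).im| ≤ dist (ω * r) (e 1) := by
      rw [dist_eq_norm, ← sub_zero (ω * r).im, ← him, ← sub_im]
      exact abs_im_le_norm _
    have h2 := (he 1).2.1
    simp only [Fin.val_one, pow_one] at h2
    rw [abs_im_exp_two_pi_I_div_three_mul] at h1
    nlinarith

theorem exists_norm_aeval_charpoly_at_cube_root_le (V : Matrix (Fin 3) (Fin 3) ℝ) {s : ℝ}
    (hV : V 2 0 = s ^ 3) :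
    ∃ C : ℝ, ∀ u ∈ Set.Icc (0 : ℝ) 1, ∀ k : ℕ,
      ‖aeval (ω ^ k * (s * u : ℝ)) (nilpotentJordanBlock ℝ 3 + u ^ 3 • V).charpoly‖ ≤
        C * u ^ 4 := by
  obtain ⟨K, hK0, hK⟩ := exists_norm_aeval_charpoly_sub_le V
  refine ⟨K * (s ^ 2 + |s| + 1), fun u ⟨hu0, hu1⟩ k => ?_⟩
  have hcube : (ω ^ k * (s * u : ℝ)) ^ 3 - V 2 0 * ((u ^ 3 : ℝ) : ℂ) = 0 := by
    rw [exp_two_pi_I_div_three_pow_mul_pow_three, hV]; push_cast; ring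
  have h := hK (u ^ 3) ⟨by positivity, pow_le_one₀ hu0 hu1⟩ (ω ^ k * (s * u : ℝ))
  rw [hcube, sub_zero, norm_exp_two_pi_I_div_three_pow_mul, abs_mul, abs_of_nonneg hu0] at h
  refine h.trans ?_
  calc u ^ 3 * K * ((|s| * u) ^ 2 + |s| * u + u ^ 3) = K * u ^ 4 * (s ^ 2 * u + |s| + u ^ 2) := by
        rw [mul_pow, sq_abs]; ring
    _ ≤ K * u ^ 4 * (s ^ 2 * 1 + |s| + 1) := by
        gcongr
        exact pow_le_one₀ hu0 hu1
    _ = K * (s ^ 2 + |s| + 1) * u ^ 4 := by ring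

theorem eventually_exists_roots_near_cube_roots (V : Matrix (Fin 3) (Fin 3) ℝ) {s : ℝ}
    (hs : s ≠ 0) (hV : V 2 0 = s ^ 3) :
    ∃ C : ℝ, ∀ᶠ u : ℝ in 𝓝[>] 0, ∃ e : Fin 3 → ℂ, (∀ k : Fin 3,
      aeval (e k) (nilpotentJordanBlock ℝ 3 + u ^ 3 • V).charpoly = 0 ∧
        ‖e k - ω ^ (k : ℕ) * s * u‖ ≤ C * u ^ 2) ∧ (e 1).im ≠ 0 := by
  obtain ⟨C, hC_eval⟩ := exists_norm_aeval_charpoly_at_cube_root_le V hV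
  have hC : Tendsto (fun u : ℝ => C * u) (𝓝[>] 0) (𝓝 0) :=
    ((continuous_const_mul C).tendsto' 0 0 (mul_zero C)).mono_left nhdsWithin_le_nhds
  refine ⟨C / s ^ 2, ?_⟩
  filter_upwards [self_mem_nhdsWithin, mem_nhdsWithin_of_mem_nhds (Iic_mem_nhds zero_lt_one),
    hC.eventually_lt_const (by positivity : 0 < |s| ^ 3 / 8)] with u (hu0 : 0 < u) hu1 hu
  set A := nilpotentJordanBlock ℝ 3 + u ^ 3 • V
  have hp : (A.charpoly.map (algebraMap ℝ ℂ)).Monic := (charpoly_monic A).map _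
  have hdeg : (A.charpoly.map (algebraMap ℝ ℂ)).natDegree = 3 := by
    simp [(charpoly_monic A).natDegree_map]
  have heval : ∀ k : ℕ, ‖(A.charpoly.map (algebraMap ℝ ℂ)).eval (ω ^ k * (s * u : ℝ))‖ ≤
      C * u ^ 4 := fun k => by
    rw [eval_map_algebraMap]
    exact hC_eval u ⟨hu0.le, hu1⟩ k
  obtain ⟨e, he, him⟩ := hp.exists_roots_near_cube_roots hdeg (mul_ne_zero hs hu0.ne') fun k =>
    calc _ ≤ C * u * u ^ 3 := by linarith [heval k]
      _ < |s| ^ 3 / 8 * u ^ 3 := by gcongr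
      _ = (|s * u| / 2) ^ 3 := by rw [abs_mul, abs_of_pos hu0]; ring
  refine ⟨e, fun k => ⟨?_, ?_⟩, him⟩
  · rw [← eval_map_algebraMap]
    exact (he k).1
  · have hk := (he k).2.trans (heval k)
    rw [ofReal_mul, ← mul_assoc, mul_pow, ← mul_assoc] at hk
    rw [div_mul_eq_mul_div, le_div_iff₀ (by positivity)]
    exact le_of_mul_le_mul_right (hk.trans_eq (by ring)) (pow_pos hu0 2)

end

/-- No broad corridor at N=3: if H(λ) = J³(0) + λV with corner element V₃₁ = γ ≠ 0, then
    for all sufficiently small λ > 0 the matrix H(λ) has a pair of non-real complex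
    conjugate eigenvalues; more precisely its three eigenvalues satisfy
    E_k = ω^k γ^{1/3} λ^{1/3}(1 + O(λ^{1/3})), ω = e^{2πi/3}. -/
theorem stmt16 (V : Matrix (Fin 3) (Fin 3) ℝ) (γ : ℝ) (hV : V 2 0 = γ) (hγ : γ ≠ 0) :
    let J : Matrix (Fin 3) (Fin 3) ℝ :=
      Matrix.of fun i j => if (j : ℕ) = (i : ℕ) + 1 then 1 else 0
    let H : ℝ → Matrix (Fin 3) (Fin 3) ℝ := fun lam => J + lam • V
    let ω : ℂ := Complex.exp (2 * Real.pi * Complex.I / 3)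
    let cbrt : ℝ := if 0 ≤ γ then γ ^ ((1 : ℝ) / 3) else -((-γ) ^ ((1 : ℝ) / 3))
    (∃ l0 > (0 : ℝ), ∀ lam ∈ Set.Ioo (0 : ℝ) l0, ∃ z : ℂ, z.im ≠ 0 ∧
      (Polynomial.aeval z) (Matrix.charpoly (H lam)) = 0 ∧
      (Polynomial.aeval (starRingEnd ℂ z)) (Matrix.charpoly (H lam)) = 0) ∧
    (∃ E : ℝ → Fin 3 → ℂ, ∃ l0 > (0 : ℝ),
      (∀ lam ∈ Set.Ioo (0 : ℝ) l0, ∀ k : Fin 3,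
        (Polynomial.aeval (E lam k)) (Matrix.charpoly (H lam)) = 0) ∧
      (∀ k : Fin 3,
        (fun lam : ℝ => E lam k - ω ^ (k : ℕ) * (cbrt : ℂ) * ((lam ^ ((1 : ℝ) / 3) : ℝ) : ℂ))
          =O[nhdsWithin 0 (Set.Ioi 0)]
            (fun lam : ℝ => lam ^ ((2 : ℝ) / 3)))) := by
  intro J H ω cbrt
  obtain ⟨C, hC⟩ := eventually_exists_roots_near_cube_roots V (signedCbrt_ne_zero hγ)
    (hV.trans (signedCbrt_pow_three γ).symm)
  obtain ⟨l0, hl0, hsub⟩ := mem_nhdsGT_iff_exists_Ioo_subset.1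
    ((tendsto_rpow_nhdsGT_zero (by norm_num : (0 : ℝ) < 1 / 3)).eventually hC)
  have key : ∀ lam ∈ Set.Ioo 0 l0, ∃ e : Fin 3 → ℂ, (∀ k : Fin 3,
      aeval (e k) (H lam).charpoly = 0 ∧
        ‖e k - ω ^ (k : ℕ) * cbrt * (lam ^ ((1 : ℝ) / 3) : ℝ)‖ ≤ C * lam ^ ((2 : ℝ) / 3)) ∧
      (e 1).im ≠ 0 := fun lam hlam => by
    obtain ⟨e, he, him⟩ := hsub hlam
    have hsq : (lam ^ ((1 : ℝ) / 3)) ^ 2 = lam ^ ((2 : ℝ) / 3) := by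
      rw [← Real.rpow_natCast, ← Real.rpow_mul hlam.1.le]; norm_num
    rw [rpow_one_third_pow_three hlam.1.le, hsq] at he
    exact ⟨e, he, him⟩
  choose! E hE using key
  refine ⟨⟨l0, hl0, fun lam hlam => ⟨E lam 1, (hE lam hlam).2, ((hE lam hlam).1 1).1, ?_⟩⟩,
    E, l0, hl0, fun lam hlam k => ((hE lam hlam).1 k).1, fun k => ?_⟩
  · rw [aeval_conj, ((hE lam hlam).1 1).1, map_zero]
  · refine IsBigO.of_bound C ?_
    filter_upwards [Ioo_mem_nhdsGT hl0] with lam hlam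
    rw [Real.norm_of_nonneg (Real.rpow_nonneg hlam.1.le _)]
    exact ((hE lam hlam).1 k).2
end

section
/- For an N×N matrix H(λ) = J^N(0) + λV(λ) with strictly lower-triangular perturbation satisfying λ·V_{j+k,j}(λ) = λ^{(k+1)/2} μ_{j+k,j} with μ_{j+k,j} = O(1), the characteristic polynomial satisfies det(H(λ) - ε√λ·I) = (-1)^N λ^{N/2} (ε^N + c_{N-1}ε^{N-1} + ... + c₀) + O(λ^{(N+1)/2}), where the coefficients c_k are polynomials in the parameters μ_{i,j}, independent of λ. -/
open Matrix Filter Asymptotics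

lemma eval_charpoly' {n : ℕ} (M : Matrix (Fin n) (Fin n) ℝ) (t : ℝ) :
    M.charpoly.eval t = (t • (1 : Matrix (Fin n) (Fin n) ℝ) - M).det := by
  rw [Matrix.charpoly, ← Polynomial.coe_evalRingHom, RingHom.map_det]
  congr 1
  ext i j
  by_cases h : i = j
  · subst h; simp [Matrix.charmatrix_apply_eq, Matrix.one_apply]
  · simp [Matrix.charmatrix_apply_ne _ _ _ h, Matrix.one_apply, h]

/-- Scaling structure of the secular determinant (Theorem 1): for H(λ) = J^N(0) + λV(λ)
    with strictly lower-triangular perturbation satisfying λ·V_{j+k,j}(λ) = λ^{(k+1)/2}μ_{j+k,j},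
    one has det(H(λ) - ε√λ·I) = (-1)^N λ^{N/2}(ε^N + c_{N-1}ε^{N-1} + ⋯ + c₀) + O(λ^{(N+1)/2}),
    with coefficients c_k independent of λ. -/
theorem stmt19 (N : ℕ) (hN : 1 ≤ N)
    (V : ℝ → Matrix (Fin N) (Fin N) ℝ) (μ : Matrix (Fin N) (Fin N) ℝ)
    (hupper : ∀ lam : ℝ, ∀ i j : Fin N, (i : ℕ) ≤ (j : ℕ) → V lam i j = 0)
    (hscale : ∀ lam : ℝ, 0 < lam → ∀ i j : Fin N, (j : ℕ) < (i : ℕ) →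
      lam * V lam i j = lam ^ (((((i : ℕ) - (j : ℕ) : ℕ) : ℝ) + 1) / 2) * μ i j) :
    let J : Matrix (Fin N) (Fin N) ℝ :=
      Matrix.of fun i j => if (j : ℕ) = (i : ℕ) + 1 then 1 else 0
    ∃ c : ℕ → ℝ, ∀ ε : ℝ,
      (fun lam : ℝ =>
          (J + lam • V lam - (ε * Real.sqrt lam) • (1 : Matrix (Fin N) (Fin N) ℝ)).det
            - (-1 : ℝ) ^ N * lam ^ ((N : ℝ) / 2)
              * (ε ^ N + ∑ i ∈ Finset.range N, c i * ε ^ i))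
        =O[nhdsWithin 0 (Set.Ioi 0)] (fun lam : ℝ => lam ^ (((N : ℝ) + 1) / 2)) := by
  intro J
  haveI : Nonempty (Fin N) := ⟨⟨0, hN⟩⟩
  set M : Matrix (Fin N) (Fin N) ℝ :=
    Matrix.of (fun i j => (if (j : ℕ) = (i : ℕ) + 1 then (1:ℝ) else 0)
      + (if (j : ℕ) < (i : ℕ) then μ i j else 0)) with hM
  refine ⟨fun i => M.charpoly.coeff i, fun ε => ?_⟩
  -- the polynomial identity
  have hpoly : ε ^ N + ∑ i ∈ Finset.range N, M.charpoly.coeff i * ε ^ i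
      = M.charpoly.eval ε := by
    have hdeg : M.charpoly.natDegree = N := by
      simp [Matrix.charpoly_natDegree_eq_dim]
    rw [Polynomial.eval_eq_sum_range, hdeg, Finset.sum_range_succ]
    have hco : M.charpoly.coeff N = 1 := by
      have := M.charpoly_monic
      rw [Polynomial.Monic, Polynomial.leadingCoeff, hdeg] at this
      exact this
    rw [hco, one_mul, add_comm]
  -- main identity for lam > 0
  have key : ∀ lam : ℝ, 0 < lam →
      (J + lam • V lam - (ε * Real.sqrt lam) • (1 : Matrix (Fin N) (Fin N) ℝ)).det
        = (-1 : ℝ) ^ N * lam ^ ((N : ℝ) / 2) * M.charpoly.eval ε := by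
    intro lam hlam
    set s := Real.sqrt lam with hs
    have hs0 : 0 < s := Real.sqrt_pos.mpr hlam
    set A := J + lam • V lam - (ε * s) • (1 : Matrix (Fin N) (Fin N) ℝ) with hA
    set B := M - ε • (1 : Matrix (Fin N) (Fin N) ℝ) with hB
    set D : Matrix (Fin N) (Fin N) ℝ := Matrix.diagonal (fun i => s ^ (i : ℕ)) with hD
    have hADB : A * D = D * (s • B) := by
      ext i j
      rw [Matrix.mul_diagonal, Matrix.diagonal_mul]
      have hAij : A i j = (if (j : ℕ) = (i : ℕ) + 1 then (1:ℝ) else 0)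
          + lam * V lam i j - (ε * s) * (if i = j then (1:ℝ) else 0) := by
        simp [hA, J, Matrix.sub_apply, Matrix.add_apply, Matrix.smul_apply, Matrix.one_apply,
          Matrix.of_apply, smul_eq_mul]
      have hBij : (s • B) i j = s * ((if (j : ℕ) = (i : ℕ) + 1 then (1:ℝ) else 0)
          + (if (j : ℕ) < (i : ℕ) then μ i j else 0) - ε * (if i = j then (1:ℝ) else 0)) := by
        simp [hB, hM, Matrix.sub_apply, Matrix.smul_apply, Matrix.one_apply, smul_eq_mul]
      rw [hAij, hBij]
      rcases lt_trichotomy ((j : ℕ)) ((i : ℕ)) with hlt | heq | hgt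
      · -- lower part
        have hij : i ≠ j := by intro h; subst h; omega
        have hne : (j : ℕ) ≠ (i : ℕ) + 1 := by omega
        have hV : lam * V lam i j = s ^ ((i : ℕ) - (j : ℕ) + 1) * μ i j := by
          rw [hscale lam hlam i j hlt]
          congr 1
          rw [hs, Real.sqrt_eq_rpow, ← Real.rpow_natCast (lam ^ ((1:ℝ)/2)),
            ← Real.rpow_mul hlam.le]
          congr 1
          push_cast
          ring
        rw [hV]
        simp only [if_neg hne, if_neg hij, if_pos hlt, mul_zero, sub_zero, zero_add]
        rw [mul_comm (s ^ ((i:ℕ) - (j:ℕ) + 1)) (μ i j), mul_assoc, ← pow_add]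
        have : (i : ℕ) - (j : ℕ) + 1 + (j : ℕ) = (i : ℕ) + 1 := by omega
        rw [this, pow_succ]
        ring
      · -- diagonal
        have hij : i = j := Fin.ext heq.symm
        subst hij
        have hne : (i : ℕ) ≠ (i : ℕ) + 1 := by omega
        have hV : lam * V lam i i = 0 := by rw [hupper lam i i le_rfl, mul_zero]
        rw [if_neg hne, hV, if_pos rfl, if_neg (lt_irrefl (i:ℕ))]
        ring
      · -- upper part
        have hij : i ≠ j := by intro h; subst h; omega
        have hnlt : ¬ ((j : ℕ) < (i : ℕ)) := by omega
        have hV : lam * V lam i j = 0 := by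
          rw [hupper lam i j (by omega), mul_zero]
        by_cases hsucc : (j : ℕ) = (i : ℕ) + 1
        · rw [if_pos hsucc, hV, if_neg hij, if_neg hnlt, hsucc, pow_succ]
          ring
        · rw [if_neg hsucc, hV, if_neg hij, if_neg hnlt]
          ring
    have hdetD : D.det ≠ 0 := by
      rw [hD, Matrix.det_diagonal]
      exact Finset.prod_ne_zero_iff.mpr (fun i _ => pow_ne_zero _ hs0.ne')
    have hdetA : A.det = s ^ N * B.det := by
      have := congrArg Matrix.det hADB
      rw [Matrix.det_mul, Matrix.det_mul, Matrix.det_smul, Fintype.card_fin] at this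
      have h2 : A.det * D.det = (s ^ N * B.det) * D.det := by
        rw [this]; ring
      exact mul_right_cancel₀ hdetD h2
    have hdetB : B.det = (-1 : ℝ) ^ N * M.charpoly.eval ε := by
      rw [eval_charpoly' M ε, hB]
      rw [show M - ε • (1 : Matrix (Fin N) (Fin N) ℝ)
          = -(ε • (1 : Matrix (Fin N) (Fin N) ℝ) - M) from (neg_sub _ _).symm]
      rw [Matrix.det_neg, Fintype.card_fin]
    have hsN : s ^ N = lam ^ ((N : ℝ) / 2) := by
      rw [hs, Real.sqrt_eq_rpow, ← Real.rpow_natCast (lam ^ ((1:ℝ)/2)),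
        ← Real.rpow_mul hlam.le]
      congr 1
      ring
    rw [hdetA, hdetB, hsN]
    ring
  -- conclude: the function is eventually zero
  have hev : (fun lam : ℝ =>
      (J + lam • V lam - (ε * Real.sqrt lam) • (1 : Matrix (Fin N) (Fin N) ℝ)).det
        - (-1 : ℝ) ^ N * lam ^ ((N : ℝ) / 2)
          * (ε ^ N + ∑ i ∈ Finset.range N, M.charpoly.coeff i * ε ^ i))
      =ᶠ[nhdsWithin 0 (Set.Ioi 0)] (fun _ => (0 : ℝ)) := by
    filter_upwards [self_mem_nhdsWithin] with lam hlam
    rw [hpoly, key lam hlam]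
    ring
  exact hev.isBigO.trans (isBigO_zero _ _)
end
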